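/- For a graph G of order at least three, ρ_o(G) = 1 if and only if diam(G) ≤ 2 and every edge of G lies on a triangle. Moreover, this condition is equivalent to p_o(G) = |V(G)|. -/

import Mathlib

open SimpleGraph

variable {V W : Type*}

/-- The two-step graph: vertices adjacent iff they share a common neighbor in `G`. -/
def SimpleGraph.twoStep (G : SimpleGraph V) : SimpleGraph V where
  Adj u v := u ≠ v ∧ ∃ w, G.Adj w u ∧ G.Adj w v
  symm := ⟨fun u v ⟨h, w, h1, h2⟩ => ⟨h.symm, w, h2, h1⟩⟩
  loopless := ⟨fun u ⟨h, _⟩ => h rfl⟩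

/-- `B` is an open packing: no two distinct vertices of `B` have a common neighbor. -/
def SimpleGraph.IsOpenPacking (G : SimpleGraph V) (B : Set V) : Prop :=
  ∀ u ∈ B, ∀ v ∈ B, u ≠ v → ∀ w, ¬(G.Adj w u ∧ G.Adj w v)

/-- The open packing partition number `p_o(G)`. -/
noncomputable def SimpleGraph.openPackingPartitionNum (G : SimpleGraph V) : ℕ :=
  sInf {k | ∃ f : V → Fin k, ∀ i, G.IsOpenPacking (f ⁻¹' {i})}

/-- `B` is a packing: distinct vertices of `B` have disjoint closed neighborhoods. -/
def SimpleGraph.IsPacking (G : SimpleGraph V) (B : Set V) : Prop :=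
  ∀ u ∈ B, ∀ v ∈ B, u ≠ v → ∀ w, ¬((G.Adj w u ∨ w = u) ∧ (G.Adj w v ∨ w = v))

/-- The 2-distance chromatic number `χ₂(G)`. -/
noncomputable def SimpleGraph.twoDistChromaticNum (G : SimpleGraph V) : ℕ :=
  sInf {k | ∃ f : V → Fin k, ∀ i, G.IsPacking (f ⁻¹' {i})}

/-- The open packing number `ρ_o(G)`. -/
noncomputable def SimpleGraph.openPackingNum (G : SimpleGraph V) [Fintype V] : ℕ :=
  sSup {n | ∃ B : Finset V, G.IsOpenPacking ↑B ∧ B.card = n}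

/-
An open packing of `G` is exactly an independent set of the two-step graph `G.twoStep`, so both
`ρ_o(G) = 1` and `p_o(G) = |V(G)|` say that `G.twoStep` is complete: any two distinct vertices
have a common neighbour. For non-adjacent vertices this means distance at most two, and for
adjacent ones that their edge lies on a triangle.
-/

namespace SimpleGraph

variable (G : SimpleGraph V)

theorem isOpenPacking_iff_isIndepSet_twoStep {B : Set V} :
    G.IsOpenPacking B ↔ G.twoStep.IsIndepSet B := by
  simp only [IsOpenPacking, isIndepSet_iff, Set.Pairwise, twoStep, not_and, not_exists]
  grind

theorem isOpenPacking_of_subsingleton {B : Set V} (hB : B.Subsingleton) : G.IsOpenPacking B :=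
  fun _ hu _ hv huv _ _ => huv (hB hu hv)

theorem IsOpenPacking.subsingleton_of_twoStep_eq_top {G : SimpleGraph V} {B : Set V}
    (hB : G.IsOpenPacking B) (h : G.twoStep = ⊤) : B.Subsingleton := by
  rw [isOpenPacking_iff_isIndepSet_twoStep, h] at hB
  intro u hu v hv
  by_contra huv
  exact hB hu hv huv huv

theorem isOpenPacking_pair_of_not_twoStep_adj {u v : V} (h : ¬G.twoStep.Adj u v) :
    G.IsOpenPacking {u, v} := by
  rw [isOpenPacking_iff_isIndepSet_twoStep, isIndepSet_iff, Set.pairwise_pair]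
  exact fun _ => ⟨h, fun h' => h h'.symm⟩

theorem twoStep_adj_iff {u v : V} :
    G.twoStep.Adj u v ↔ u ≠ v ∧ (G.commonNeighbors u v).Nonempty := by
  simp only [twoStep, Set.Nonempty, mem_commonNeighbors, adj_comm]

theorem edist_le_two_iff {u v : V} :
    G.edist u v ≤ 2 ↔ u = v ∨ G.Adj u v ∨ (G.commonNeighbors u v).Nonempty := by
  rw [← not_lt, two_lt_edist_iff, Set.nonempty_iff_ne_empty]
  tauto

theorem twoStep_eq_top_iff : G.twoStep = ⊤ ↔
    G.ediam ≤ 2 ∧ ∀ u v, G.Adj u v → ∃ w, G.Adj u w ∧ G.Adj v w := by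
  simp only [eq_top_iff_forall_ne_adj, twoStep_adj_iff, ediam_le_iff, edist_le_two_iff]
  refine ⟨fun h => ⟨fun u v => ?_, fun u v huv => (h u v huv.ne).2⟩,
    fun ⟨hdiam, htri⟩ u v huv => ?_⟩
  · rcases eq_or_ne u v with rfl | huv
    · exact .inl rfl
    · exact .inr (.inr (h u v huv).2)
  · refine ⟨huv, ?_⟩
    rcases hdiam u v with rfl | hadj | hcommon
    · exact absurd rfl huv
    · exact htri u v hadj
    · exact hcommon

theorem diam_le_iff_ediam_le (h : G.ediam ≠ ⊤) {n : ℕ} : G.diam ≤ n ↔ G.ediam ≤ n := by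
  rw [← ENat.natCast_toNat h, Nat.cast_le]
  rfl

section openPackingNum

variable [Fintype V]

theorem le_openPackingNum {B : Finset V} (hB : G.IsOpenPacking B) : B.card ≤ G.openPackingNum :=
  le_csSup ⟨Fintype.card V, by rintro _ ⟨B, -, rfl⟩; exact B.card_le_univ⟩ ⟨B, hB, rfl⟩

theorem openPackingNum_le {n : ℕ} (h : ∀ B : Finset V, G.IsOpenPacking B → B.card ≤ n) :
    G.openPackingNum ≤ n :=
  csSup_le ⟨0, ∅, G.isOpenPacking_of_subsingleton (by simp), rfl⟩
    fun _ ⟨B, hB, hn⟩ => hn ▸ h B hB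

theorem openPackingNum_eq_one_iff [Nonempty V] : G.openPackingNum = 1 ↔ G.twoStep = ⊤ := by
  classical
  refine ⟨fun h => ?_, fun h => le_antisymm ?_ ?_⟩
  · rw [eq_top_iff_forall_ne_adj]
    intro u v huv
    by_contra hadj
    have := G.le_openPackingNum (B := {u, v})
      (by simpa using G.isOpenPacking_pair_of_not_twoStep_adj hadj)
    rw [Finset.card_pair huv, h] at this
    omega
  · exact G.openPackingNum_le fun B hB => Finset.card_le_one.mpr fun u hu v hv =>
      hB.subsingleton_of_twoStep_eq_top h hu hv
  · obtain ⟨v⟩ := ‹Nonempty V›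
    simpa using G.le_openPackingNum (B := {v}) (G.isOpenPacking_of_subsingleton (by simp))

end openPackingNum

theorem openPackingPartitionNum_le_card {α : Type*} [Fintype α] (f : V → α)
    (hf : ∀ a, G.IsOpenPacking (f ⁻¹' {a})) : G.openPackingPartitionNum ≤ Fintype.card α :=
  Nat.sInf_le ⟨Fintype.equivFin α ∘ f, fun i => by
    convert hf ((Fintype.equivFin α).symm i) using 1
    ext x
    simp [Equiv.eq_symm_apply]⟩

theorem exists_openPacking_partition [Finite V] :
    ∃ f : V → Fin G.openPackingPartitionNum, ∀ i, G.IsOpenPacking (f ⁻¹' {i}) :=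
  Nat.sInf_mem (s := {k | ∃ f : V → Fin k, ∀ i, G.IsOpenPacking (f ⁻¹' {i})})
    ⟨Nat.card V, Finite.equivFin V, fun _ => G.isOpenPacking_of_subsingleton
      (Set.subsingleton_singleton.preimage (Finite.equivFin V).injective)⟩

theorem card_le_openPackingPartitionNum [Fintype V] (h : G.twoStep = ⊤) :
    Fintype.card V ≤ G.openPackingPartitionNum := by
  obtain ⟨f, hf⟩ := G.exists_openPacking_partition
  simpa using Fintype.card_le_of_injective f fun a b hab =>
    (hf (f b)).subsingleton_of_twoStep_eq_top h hab rfl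

theorem openPackingPartitionNum_lt_card [Fintype V] (h : G.twoStep ≠ ⊤) :
    G.openPackingPartitionNum < Fintype.card V := by
  classical
  obtain ⟨u, v, huv, hadj⟩ : ∃ u v, u ≠ v ∧ ¬G.twoStep.Adj u v := by
    simpa [eq_top_iff_forall_ne_adj] using h
  let f : V → {x // x ≠ v} := fun x => if hx : x = v then ⟨u, huv⟩ else ⟨x, hx⟩
  have hmerge : ∀ a b, f a = f b → a ≠ b → a = u ∧ b = v ∨ a = v ∧ b = u := by
    intro a b hab hne
    simp only [f] at hab
    split_ifs at hab <;> simp_all [Subtype.ext_iff]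
  have hf : ∀ x, G.IsOpenPacking (f ⁻¹' {x}) := by
    intro x
    rw [isOpenPacking_iff_isIndepSet_twoStep]
    intro a ha b hb hne
    rcases hmerge a b (ha.trans hb.symm) hne with ⟨rfl, rfl⟩ | ⟨rfl, rfl⟩
    · exact hadj
    · exact fun h => hadj h.symm
  calc G.openPackingPartitionNum ≤ Fintype.card {x // x ≠ v} :=
        G.openPackingPartitionNum_le_card f hf
    _ < Fintype.card V := Fintype.card_subtype_lt (p := (· ≠ v)) (not_not.mpr rfl)

theorem openPackingPartitionNum_eq_card_iff [Fintype V] :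
    G.openPackingPartitionNum = Fintype.card V ↔ G.twoStep = ⊤ := by
  refine ⟨fun h => by_contra fun hne => (G.openPackingPartitionNum_lt_card hne).ne h,
    fun h => le_antisymm ?_ (G.card_le_openPackingPartitionNum h)⟩
  exact G.openPackingPartitionNum_le_card id fun _ =>
    G.isOpenPacking_of_subsingleton Set.subsingleton_singleton

end SimpleGraph

theorem stmt_16 [Fintype V] (G : SimpleGraph V) (hc : G.Connected)
    (h3 : 3 ≤ Fintype.card V) :
    (G.openPackingNum = 1 ↔
        (G.diam ≤ 2 ∧ ∀ u v, G.Adj u v → ∃ w, G.Adj u w ∧ G.Adj v w)) ∧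
      (G.openPackingNum = 1 ↔ G.openPackingPartitionNum = Fintype.card V) := by
  have : Nonempty V := Fintype.card_pos_iff.mp (by omega)
  have hdiam : G.diam ≤ 2 ↔ G.ediam ≤ 2 := by
    exact_mod_cast G.diam_le_iff_ediam_le (connected_iff_ediam_ne_top.mp hc) (n := 2)
  refine ⟨?_, G.openPackingNum_eq_one_iff.trans G.openPackingPartitionNum_eq_card_iff.symm⟩
  rw [G.openPackingNum_eq_one_iff, G.twoStep_eq_top_iff, hdiam]
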